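/- Let C be a k-dimensional linear code of length n over a finite field F, and let G be a k × n matrix over F whose rows form a basis of C. Then C is Euclidean LCD (i.e., C ∩ C^⊥ = {0}, where C^⊥ is the dual with respect to the Euclidean inner product x · y = Σ_i x_i y_i) if and only if the k × k matrix G Gᵀ is invertible. -/
import Mathlib


/-- The Euclidean dual of a linear code `C ⊆ F^n`. -/
def eucDual {F : Type*} [Field F] {n : ℕ} (C : Submodule F (Fin n → F)) :
    Submodule F (Fin n → F) where
  carrier := {x | ∀ c ∈ C, ∑ i, x i * c i = 0}
  add_mem' := by
    intro a b ha hb c hc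
    simp only [Set.mem_setOf_eq] at *
    simp [Pi.add_apply, add_mul, Finset.sum_add_distrib, ha c hc, hb c hc]
  zero_mem' := by
    intro c hc
    simp
  smul_mem' := by
    intro r a ha c hc
    simp only [Set.mem_setOf_eq] at *
    simp [Pi.smul_apply, smul_eq_mul, mul_assoc, ← Finset.mul_sum, ha c hc]

/-- A linear code `C` with generator matrix `G` is Euclidean LCD if and only if
`G * Gᵀ` is invertible. -/
theorem lcd_iff_isUnit_mul_transpose
    (F : Type) [Field F] [Fintype F] (n k : ℕ)
    (C : Submodule F (Fin n → F)) (G : Matrix (Fin k) (Fin n) F)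
    (hind : LinearIndependent F (fun i : Fin k => G i))
    (hspan : Submodule.span F (Set.range fun i : Fin k => G i) = C) :
    C ⊓ eucDual C = ⊥ ↔ IsUnit (G * G.transpose) := by
  have hG0 : ∀ x : Fin k → F, Matrix.vecMul x G = 0 → x = 0 := by
    intro x hx
    have := Fintype.linearIndependent_iff.mp hind x ?_
    · funext i; exact this i
    · funext j
      have := congrFun hx j
      simpa [Matrix.vecMul, dotProduct] using this
  have hmemC : ∀ x : Fin k → F, Matrix.vecMul x G ∈ C := by
    intro x
    rw [← hspan]
    have : Matrix.vecMul x G = ∑ i, x i • G i := by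
      funext j
      simp [Matrix.vecMul, dotProduct]
    rw [this]
    exact Submodule.sum_mem _ fun i _ =>
      Submodule.smul_mem _ _ (Submodule.subset_span ⟨i, rfl⟩)
  have key : ∀ x : Fin k → F,
      Matrix.vecMul x (G * G.transpose) = 0 ↔ Matrix.vecMul x G ∈ eucDual C := by
    intro x
    constructor
    · intro hx c hc
      rw [← hspan] at hc
      induction hc using Submodule.span_induction with
      | mem c hcmem =>
        obtain ⟨j, rfl⟩ := hcmem
        have h1 := congrFun hx j
        simp only [Matrix.vecMul, dotProduct, Matrix.mul_apply, Pi.zero_apply] at h1 ⊢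
        rw [show ∑ i, (∑ l, x l * G l i) * G j i = ∑ l, x l * ∑ i, G l i * G j i by
          simp only [Finset.sum_mul, Finset.mul_sum, mul_assoc]
          exact Finset.sum_comm ..]
        exact h1
      | zero => simp
      | add a b _ _ ha hb => simp [mul_add, Finset.sum_add_distrib, ha, hb]
      | smul r a _ ha =>
        simp only [Pi.smul_apply, smul_eq_mul]
        rw [Finset.sum_congr rfl (fun i _ => by ring_nf : ∀ i ∈ Finset.univ,
          Matrix.vecMul x G i * (r * a i) = r * (Matrix.vecMul x G i * a i))]
        rw [← Finset.mul_sum, ha, mul_zero]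
    · intro hx
      funext j
      have := hx (G j) (hspan ▸ Submodule.subset_span ⟨j, rfl⟩)
      simp only [Matrix.vecMul, dotProduct, Matrix.mul_apply, Pi.zero_apply, Matrix.transpose_apply] at this ⊢
      rw [show ∑ l, x l * ∑ i, G l i * G j i = ∑ i, (∑ l, x l * G l i) * G j i by
        simp only [Finset.sum_mul, Finset.mul_sum, mul_assoc]
        exact Finset.sum_comm ..]
      exact this
  rw [Matrix.isUnit_iff_isUnit_det, isUnit_iff_ne_zero, Ne,
    ← Matrix.exists_vecMul_eq_zero_iff]
  push_neg
  constructor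
  · intro h v hv
    by_contra hv0
    have hmem : Matrix.vecMul v G ∈ C ⊓ eucDual C :=
      ⟨hmemC v, (key v).mp hv0⟩
    rw [h, Submodule.mem_bot] at hmem
    exact hv (hG0 v hmem)
  · intro h
    rw [Submodule.eq_bot_iff]
    intro v ⟨hvC, hvD⟩
    rw [← hspan] at hvC
    obtain ⟨x, rfl⟩ := Submodule.mem_span_range_iff_exists_fun F |>.mp hvC
    have hv : (∑ i, x i • G i) = Matrix.vecMul x G := by
      funext j; simp [Matrix.vecMul, dotProduct]
    rw [hv] at hvD ⊢
    have : x = 0 := by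
      by_contra hx0
      exact h x hx0 ((key x).mpr hvD)
    simp [this]
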